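/- arXiv:1311.0697 — 2 statements merged into one kernel-verified Lean document; each statement's English description precedes it below -/
import Mathlib

section
/- Let Γ be a profinite group and 𝔊 = ∏_{i=1}^{n} 𝔊_i a direct product of finite Γ-groups such that gcd(|𝔊_i|, |𝔊_j|) = 1 for all i ≠ j, and let η : Γ → 𝔊 be a continuous 1-cocycle. Then η is surjective if and only if for each i = 1,…,n the induced cocycle η_i : Γ → 𝔊_i (η followed by the i-th projection) is surjective. -/
/-!
The fibres of a 1-cocycle `η` are the left cosets of `ker η = {γ | η γ = 1}`, so when `ηᵢ` is
surjective, `Γ ⧸ ker ηᵢ ≃ 𝔊ᵢ` and `ker ηᵢ` has index `|𝔊ᵢ|`. For subgroups of pairwise coprime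
finite indices the index of the intersection is the product of the indices, so the injection
`Γ ⧸ ⋂ Kᵢ → ∏ Γ ⧸ Kᵢ` is a bijection (a Chinese remainder theorem for cosets): a single `γ` can
be chosen in prescribed cosets of all the `ker ηᵢ`, and then `η γ` has all prescribed components.
-/

namespace Subgroup

variable {G ι : Type*} [Group G] [Fintype ι]

theorem index_iInf_eq_prod_of_pairwise_coprime (K : ι → Subgroup G) [∀ i, (K i).FiniteIndex]
    (hK : Pairwise fun i j => Nat.Coprime (K i).index (K j).index) :
    (⨅ i, K i).index = ∏ i, (K i).index := by
  have : (⨅ i, K i).FiniteIndex := finiteIndex_iInf fun i => inferInstance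
  refine le_antisymm ?_ (Nat.le_of_dvd (Nat.pos_of_ne_zero FiniteIndex.index_ne_zero) ?_)
  · simpa only [relIndex_top_right] using relIndex_iInf_le (L := ⊤) K
  · exact Fintype.prod_dvd_of_isRelPrime (fun i j hij => Nat.coprime_iff_isRelPrime.mp (hK hij))
      fun i => index_dvd_of_le (iInf_le K i)

theorem surjective_mk_pi_of_pairwise_coprime_index (K : ι → Subgroup G) [∀ i, (K i).FiniteIndex]
    (hK : Pairwise fun i j => Nat.Coprime (K i).index (K j).index) :
    Function.Surjective fun (g : G) (i : ι) => (g : G ⧸ K i) := by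
  have hcard : Nat.card (G ⧸ ⨅ i, K i) = Nat.card (∀ i, G ⧸ K i) := by
    rw [Nat.card_pi]
    exact index_iInf_eq_prod_of_pairwise_coprime K hK
  intro x
  obtain ⟨q, rfl⟩ := ((Nat.bijective_iff_injective_and_card _).mpr
    ⟨(quotientiInfEmbedding K).injective, hcard⟩).surjective x
  obtain ⟨g, rfl⟩ := QuotientGroup.mk_surjective q
  exact ⟨g, rfl⟩

end Subgroup

/-- A non-abelian 1-cocycle. -/
def IsCrossedHom {Γ A : Type*} [Group Γ] [Group A] [MulDistribMulAction Γ A] (η : Γ → A) : Prop :=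
  ∀ σ τ, η (σ * τ) = η σ * σ • η τ

namespace IsCrossedHom

variable {Γ A : Type*} [Group Γ] [Group A] [MulDistribMulAction Γ A] {η : Γ → A}

theorem map_one (hη : IsCrossedHom η) : η 1 = 1 := by
  simpa only [one_mul, one_smul, left_eq_mul] using hη 1 1

theorem eval {ι : Type*} {M : ι → Type*} [∀ i, Group (M i)]
    [∀ i, MulDistribMulAction Γ (M i)] {η : Γ → ∀ i, M i} (hη : IsCrossedHom η) (i : ι) :
    IsCrossedHom fun γ => η γ i :=
  fun σ τ => congrFun (hη σ τ) i

def ker (hη : IsCrossedHom η) : Subgroup Γ where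
  carrier := {γ | η γ = 1}
  one_mem' := hη.map_one
  mul_mem' {σ τ} (hσ : η σ = 1) (hτ : η τ = 1) := show η (σ * τ) = 1 by
    rw [hη, hσ, hτ, smul_one, one_mul]
  inv_mem' {σ} (hσ : η σ = 1) := show η σ⁻¹ = 1 by
    have := hη σ⁻¹ σ
    rwa [inv_mul_cancel, hη.map_one, hσ, smul_one, mul_one, eq_comm] at this

theorem mem_ker (hη : IsCrossedHom η) {γ : Γ} : γ ∈ hη.ker ↔ η γ = 1 := Iff.rfl

theorem apply_eq_apply_iff (hη : IsCrossedHom η) {σ τ : Γ} :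
    η σ = η τ ↔ (σ : Γ ⧸ hη.ker) = τ := by
  have h := hη σ (σ⁻¹ * τ)
  rw [mul_inv_cancel_left] at h
  rw [QuotientGroup.eq, mem_ker, h, left_eq_mul]
  exact EmbeddingLike.map_eq_one_iff (f := MulDistribMulAction.toMulAut Γ A σ)

theorem index_ker_of_surjective (hη : IsCrossedHom η) (h : Function.Surjective η) :
    hη.ker.index = Nat.card A := by
  refine Nat.card_eq_of_bijective (Quotient.lift η fun σ τ hστ =>
    hη.apply_eq_apply_iff.mpr (Quotient.sound hστ)) ⟨?_, ?_⟩
  · rintro ⟨σ⟩ ⟨τ⟩ hστ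
    exact hη.apply_eq_apply_iff.mp hστ
  · exact fun a => (h a).imp' QuotientGroup.mk fun _ => id

end IsCrossedHom

theorem surjective_cocycle_coprime_product_general
    {Γ : Type*} [Group Γ]
    {n : ℕ} (𝔊 : Fin n → Type*) [∀ i, Group (𝔊 i)] [∀ i, Finite (𝔊 i)]
    [∀ i, MulDistribMulAction Γ (𝔊 i)]
    (hcoprime : ∀ i j, i ≠ j → Nat.Coprime (Nat.card (𝔊 i)) (Nat.card (𝔊 j)))
    (η : Γ → ∀ i, 𝔊 i)
    (hcoc : ∀ σ τ : Γ, η (σ * τ) = η σ * σ • η τ) :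
    Function.Surjective η ↔ ∀ i, Function.Surjective (fun γ : Γ => η γ i) := by
  refine ⟨fun h i => (Function.surjective_eval i).comp h, fun h g => ?_⟩
  have hη : IsCrossedHom η := hcoc
  have hindex i : (hη.eval i).ker.index = Nat.card (𝔊 i) :=
    (hη.eval i).index_ker_of_surjective (h i)
  have _ i : (hη.eval i).ker.FiniteIndex := ⟨by rw [hindex]; exact Nat.card_pos.ne'⟩
  choose a ha using fun i => h i (g i)
  obtain ⟨γ, hγ⟩ := Subgroup.surjective_mk_pi_of_pairwise_coprime_index _
    (fun i j hij => by simpa only [hindex] using hcoprime i j hij)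
    fun i => (a i : Γ ⧸ (hη.eval i).ker)
  exact ⟨γ, funext fun i => ((hη.eval i).apply_eq_apply_iff.mpr (congrFun hγ i)).trans (ha i)⟩

/-- Let `Γ` be a profinite group and `𝔊 = ∏ᵢ 𝔊ᵢ` a finite direct product of finite
`Γ`-groups of pairwise coprime orders, and let `η : Γ → 𝔊` be a continuous 1-cocycle.
Then `η` is surjective if and only if each component cocycle `ηᵢ : Γ → 𝔊ᵢ` is surjective. -/
theorem surjective_cocycle_coprime_product
    {Γ : Type*} [Group Γ] [TopologicalSpace Γ] [IsTopologicalGroup Γ]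
    [CompactSpace Γ] [T2Space Γ] [TotallyDisconnectedSpace Γ]
    {n : ℕ} (𝔊 : Fin n → Type*) [∀ i, Group (𝔊 i)] [∀ i, Finite (𝔊 i)]
    [∀ i, TopologicalSpace (𝔊 i)] [∀ i, DiscreteTopology (𝔊 i)]
    [∀ i, MulDistribMulAction Γ (𝔊 i)] [∀ i, ContinuousSMul Γ (𝔊 i)]
    (hcoprime : ∀ i j, i ≠ j → Nat.Coprime (Nat.card (𝔊 i)) (Nat.card (𝔊 j)))
    (η : Γ → ∀ i, 𝔊 i) (hcont : Continuous η)
    (hcoc : ∀ σ τ : Γ, η (σ * τ) = η σ * σ • η τ) :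
    Function.Surjective η ↔ ∀ i, Function.Surjective (fun γ : Γ => η γ i) :=
  surjective_cocycle_coprime_product_general 𝔊 hcoprime η hcoc
end

section
/- Let η : Γ → 𝔊 be a generating cocycle. Then: (1) an ideal a of 𝔊 is a Kneser ideal if and only if for every open ideal b of 𝔊 with a ⊆ b the index (Γ : S(b)) equals the index (𝔊 : b); (2) every Kneser ideal of 𝔊 contains a minimal Kneser ideal, i.e. a Kneser ideal that is minimal with respect to inclusion among all Kneser ideals. -/
/-- An *ideal* of a topological `Γ`-group `𝔊`: a closed, normal, `Γ`-invariant subgroup. -/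
def IsIdealSG (Γ : Type*) {𝔊 : Type*} [Group 𝔊] [TopologicalSpace 𝔊] [SMul Γ 𝔊]
    (a : Subgroup 𝔊) : Prop :=
  IsClosed (a : Set 𝔊) ∧ a.Normal ∧ ∀ (γ : Γ) (g : 𝔊), g ∈ a → γ • g ∈ a

/-- An ideal `a` of `𝔊` is a *Kneser ideal* (with respect to a cocycle `η : Γ → 𝔊`) if the
induced cocycle `η_a : Γ → 𝔊/a` is surjective. -/
def IsKneserIdeal {Γ 𝔊 : Type*} [Group 𝔊] [TopologicalSpace 𝔊] [SMul Γ 𝔊]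
    (η : Γ → 𝔊) (a : Subgroup 𝔊) : Prop :=
  Function.Surjective (fun γ : Γ => (QuotientGroup.mk (η γ) : 𝔊 ⧸ a))

/-!
The cocycle identity gives `η (σ⁻¹ * τ) = σ⁻¹ • ((η σ)⁻¹ * η τ)`, so for a `Γ`-stable subgroup `b`
the map `η` induces an injection `Γ ⧸ S(b) ↪ 𝔊 ⧸ b`; when `b` is open both sides are finite and
surjectivity modulo `b` is equivalent to `(Γ : S(b)) = (𝔊 : b)`. A closed ideal of the profinite
group `𝔊` is the intersection of the open ideals containing it, and by compactness of `Γ` a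
directed intersection of closed Kneser ideals is again a Kneser ideal. This gives (1), and applied
to chains it makes Zorn's lemma give (2).
-/

open Pointwise Topology

section

variable {Γ 𝔊 : Type*}

def IsCocycle [Mul Γ] [Mul 𝔊] [SMul Γ 𝔊] (η : Γ → 𝔊) : Prop :=
  ∀ σ τ : Γ, η (σ * τ) = η σ * σ • η τ

namespace IsCocycle

variable [Group Γ] [Group 𝔊] [MulDistribMulAction Γ 𝔊] {η : Γ → 𝔊}

theorem map_one (hη : IsCocycle η) : η 1 = 1 := by
  simpa using hη 1 1

theorem map_inv (hη : IsCocycle η) (σ : Γ) : η σ⁻¹ = σ⁻¹ • (η σ)⁻¹ := by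
  have h := hη σ⁻¹ σ
  rw [inv_mul_cancel, hη.map_one, eq_comm, ← eq_inv_mul_iff_mul_eq, mul_one] at h
  rw [smul_inv', h, inv_inv]

theorem map_inv_mul (hη : IsCocycle η) (σ τ : Γ) :
    η (σ⁻¹ * τ) = σ⁻¹ • ((η σ)⁻¹ * η τ) := by
  rw [hη, hη.map_inv, smul_mul']

/-- The subgroup `S(b) = η⁻¹(b)` of `Γ`. -/
def preimageSubgroup (hη : IsCocycle η) (b : Subgroup 𝔊)
    (hb : ∀ (γ : Γ) (g : 𝔊), g ∈ b → γ • g ∈ b) : Subgroup Γ where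
  carrier := η ⁻¹' b
  one_mem' := by simp [hη.map_one]
  mul_mem' {σ τ} hσ hτ := by
    simp only [Set.mem_preimage, SetLike.mem_coe, hη σ τ] at *
    exact b.mul_mem hσ (hb σ _ hτ)
  inv_mem' {σ} hσ := by
    simp only [Set.mem_preimage, SetLike.mem_coe, hη.map_inv] at *
    exact hb _ _ (b.inv_mem hσ)

theorem mk_eq_mk_iff (hη : IsCocycle η) {b : Subgroup 𝔊}
    (hb : ∀ (γ : Γ) (g : 𝔊), g ∈ b → γ • g ∈ b) (σ τ : Γ) :
    (η σ : 𝔊 ⧸ b) = η τ ↔ η (σ⁻¹ * τ) ∈ b := by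
  rw [QuotientGroup.eq, hη.map_inv_mul]
  exact ⟨hb σ⁻¹ _, fun h => by simpa using hb σ _ h⟩

theorem exists_injective_quotient_map (hη : IsCocycle η) {b : Subgroup 𝔊}
    (hb : ∀ (γ : Γ) (g : 𝔊), g ∈ b → γ • g ∈ b) {D : Subgroup Γ}
    (hD : (D : Set Γ) = η ⁻¹' b) :
    ∃ f : Γ ⧸ D → 𝔊 ⧸ b, Function.Injective f ∧ ∀ γ : Γ, f γ = η γ := by
  have hrel : ∀ σ τ : Γ, (σ : Γ ⧸ D) = τ ↔ (η σ : 𝔊 ⧸ b) = η τ := fun σ τ => by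
    rw [hη.mk_eq_mk_iff hb, QuotientGroup.eq, ← SetLike.mem_coe, hD, Set.mem_preimage,
      SetLike.mem_coe]
  refine ⟨fun x => x.liftOn' (fun γ => (η γ : 𝔊 ⧸ b)) fun σ τ h =>
    (hrel σ τ).1 (Quotient.sound' h), fun x y => ?_, fun γ => rfl⟩
  induction x using QuotientGroup.induction_on
  induction y using QuotientGroup.induction_on
  exact (hrel _ _).2

variable [TopologicalSpace 𝔊]

theorem isKneserIdeal_iff_index_eq (hη : IsCocycle η) {b : Subgroup 𝔊} [Finite (𝔊 ⧸ b)]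
    (hb : ∀ (γ : Γ) (g : 𝔊), g ∈ b → γ • g ∈ b) {D : Subgroup Γ}
    (hD : (D : Set Γ) = η ⁻¹' b) :
    IsKneserIdeal η b ↔ D.index = b.index := by
  obtain ⟨f, hf_inj, hf⟩ := hη.exists_injective_quotient_map hb hD
  have : Finite (Γ ⧸ D) := Finite.of_injective f hf_inj
  have hcomp : (fun γ : Γ => (η γ : 𝔊 ⧸ b)) = f ∘ QuotientGroup.mk := funext fun γ => (hf γ).symm
  rw [IsKneserIdeal, hcomp, QuotientGroup.mk_surjective.of_comp_iff, Subgroup.index,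
    Subgroup.index]
  exact ⟨fun h => Nat.card_eq_of_bijective f ⟨hf_inj, h⟩,
    fun h => ((Nat.bijective_iff_injective_and_card f).2 ⟨hf_inj, h⟩).2⟩

end IsCocycle

section Kneser

variable [Group 𝔊] [TopologicalSpace 𝔊] [SMul Γ 𝔊] {η : Γ → 𝔊}

theorem IsKneserIdeal.mono {a b : Subgroup 𝔊} (hab : a ≤ b) (ha : IsKneserIdeal η a) :
    IsKneserIdeal η b := by
  intro q
  induction q using QuotientGroup.induction_on with | H g => ?_
  obtain ⟨γ, hγ⟩ := ha g
  exact ⟨γ, QuotientGroup.eq.2 (hab (QuotientGroup.eq.1 hγ))⟩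

/-- Compactness of `Γ`: the sets `{γ | η γ ≡ g mod b}` form a directed family of nonempty closed
sets, so they have a common point. -/
theorem IsKneserIdeal.sInf [TopologicalSpace Γ] [CompactSpace Γ] [IsTopologicalGroup 𝔊]
    (hη : Continuous η) {s : Set (Subgroup 𝔊)} (hne : s.Nonempty) (hdir : DirectedOn (· ≥ ·) s)
    (hclosed : ∀ b ∈ s, IsClosed (b : Set 𝔊)) (hK : ∀ b ∈ s, IsKneserIdeal η b) :
    IsKneserIdeal η (sInf s) := by
  intro q
  induction q using QuotientGroup.induction_on with | H g => ?_
  let K : Subgroup 𝔊 → Set Γ := fun b => (fun γ => (η γ)⁻¹ * g) ⁻¹' b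
  have : Nonempty s := hne.to_subtype
  obtain ⟨γ, hγ⟩ := IsCompact.nonempty_iInter_of_directed_nonempty_isCompact_isClosed
    (K ∘ Subtype.val) (hdir.directed_val.mono_comp _ fun _ _ hbc => Set.preimage_mono hbc)
    (fun b => ⟨_, QuotientGroup.eq.1 (hK b.1 b.2 g).choose_spec⟩)
    (fun b => ((hclosed b.1 b.2).preimage (by fun_prop)).isCompact)
    (fun b => (hclosed b.1 b.2).preimage (by fun_prop))
  exact ⟨γ, QuotientGroup.eq.2 (Subgroup.mem_sInf.2 fun b hb => Set.mem_iInter.1 hγ ⟨b, hb⟩)⟩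

end Kneser

section Lattice

variable [Group 𝔊] [TopologicalSpace 𝔊] [SMul Γ 𝔊]

theorem isIdealSG_top : IsIdealSG Γ (⊤ : Subgroup 𝔊) :=
  ⟨by simp, inferInstance, fun _ _ _ => trivial⟩

theorem isIdealSG_sInf {s : Set (Subgroup 𝔊)} (hs : ∀ b ∈ s, IsIdealSG Γ b) :
    IsIdealSG Γ (sInf s) := by
  refine ⟨?_, ⟨fun g hg x => ?_⟩, fun γ g hg => ?_⟩
  · rw [Subgroup.coe_sInf]
    exact isClosed_biInter fun b hb => (hs b hb).1
  all_goals
    rw [Subgroup.mem_sInf] at hg ⊢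
    intro b hb
  · exact (hs b hb).2.1.conj_mem g (hg b hb) x
  · exact (hs b hb).2.2 γ g (hg b hb)

theorem IsIdealSG.inf {a b : Subgroup 𝔊} (ha : IsIdealSG Γ a) (hb : IsIdealSG Γ b) :
    IsIdealSG Γ (a ⊓ b) := by
  rw [← sInf_pair]
  exact isIdealSG_sInf (by simp [ha, hb])

end Lattice

theorem IsIdealSG.sup_of_isOpen [Group Γ] [Group 𝔊] [TopologicalSpace 𝔊] [IsTopologicalGroup 𝔊]
    [MulDistribMulAction Γ 𝔊] {a b : Subgroup 𝔊} (ha : IsIdealSG Γ a) (hb : IsIdealSG Γ b)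
    (hbo : IsOpen (b : Set 𝔊)) : IsIdealSG Γ (a ⊔ b) := by
  have := ha.2.1
  have := hb.2.1
  refine ⟨Subgroup.isClosed_of_isOpen _ (Subgroup.isOpen_mono le_sup_right hbo), inferInstance,
    fun γ g hg => ?_⟩
  rw [← SetLike.mem_coe, Subgroup.mul_normal] at hg ⊢
  obtain ⟨p, hp, q, hq, rfl⟩ := hg
  rw [smul_mul']
  exact Set.mul_mem_mul (ha.2.2 γ p hp) (hb.2.2 γ q hq)

section Invariant

variable [Group Γ] [Group 𝔊] [MulDistribMulAction Γ 𝔊] (V : Subgroup 𝔊)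

theorem Subgroup.smul_mem_iSup_smul (δ : Γ) {g : 𝔊} (hg : g ∈ ⨆ γ : Γ, γ • V) :
    δ • g ∈ ⨆ γ : Γ, γ • V := by
  have hle : ⨆ γ : Γ, γ • V ≤ δ⁻¹ • ⨆ γ : Γ, γ • V := iSup_le fun γ => by
    rw [Subgroup.subset_pointwise_smul_iff, inv_inv, smul_smul]
    exact le_iSup (fun γ : Γ => γ • V) (δ * γ)
  exact Subgroup.mem_inv_pointwise_smul_iff.1 (hle hg)

theorem Subgroup.Normal.iSup_smul (hV : V.Normal) : (⨆ γ : Γ, γ • V).Normal :=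
  have : ∀ γ : Γ, (γ • V).Normal := fun γ =>
    hV.map (MulDistribMulAction.toMonoidEnd Γ 𝔊 γ) (MulAction.surjective γ)
  Subgroup.iSup_normal _

end Invariant

section Profinite

variable [Group Γ] [TopologicalSpace Γ] [CompactSpace Γ]
  [Group 𝔊] [TopologicalSpace 𝔊] [IsTopologicalGroup 𝔊] [CompactSpace 𝔊]
  [TotallyDisconnectedSpace 𝔊] [MulDistribMulAction Γ 𝔊] [ContinuousSMul Γ 𝔊]

/-- By compactness of `Γ` there is an open normal `V` with `Γ • V ⊆ H ⊆ U` for an open normal `H`;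
the subgroup generated by the translates `γ • V` is then an open ideal inside `U`. -/
theorem exists_isIdealSG_isOpen_subset {U : Set 𝔊} (hU : IsOpen U) (h1U : 1 ∈ U) :
    ∃ M : Subgroup 𝔊, IsIdealSG Γ M ∧ IsOpen (M : Set 𝔊) ∧ (M : Set 𝔊) ⊆ U := by
  obtain ⟨H, hHU⟩ := ProfiniteGrp.exist_openNormalSubgroup_sub_open_nhds_of_one hU h1U
  have hstable : ∀ᶠ x in 𝓝 (1 : 𝔊), ∀ γ ∈ (Set.univ : Set Γ), γ • x ∈ H :=
    isCompact_univ.eventually_forall_of_forall_eventually fun γ _ =>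
      (H.isOpen.preimage (by fun_prop : Continuous fun z : 𝔊 × Γ => z.2 • z.1)).mem_nhds
        (by simp)
  obtain ⟨W, hWH, hWo, h1W⟩ := mem_nhds_iff.1 hstable
  obtain ⟨V, hVW⟩ := ProfiniteGrp.exist_openNormalSubgroup_sub_open_nhds_of_one hWo h1W
  have hVM : V.toSubgroup ≤ ⨆ γ : Γ, γ • V.toSubgroup := by
    simpa using le_iSup (fun γ : Γ => γ • V.toSubgroup) 1
  have hMopen := Subgroup.isOpen_mono hVM V.isOpen
  refine ⟨_, ⟨Subgroup.isClosed_of_isOpen _ hMopen, V.isNormal'.iSup_smul,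
    fun γ g => Subgroup.smul_mem_iSup_smul _ γ⟩, hMopen, fun g hg => hHU ?_⟩
  refine (iSup_le fun γ x hx => ?_ : ⨆ γ : Γ, γ • V.toSubgroup ≤ H.toSubgroup) hg
  obtain ⟨v, hv, rfl⟩ := hx
  exact hWH (hVW hv) γ trivial

end Profinite

section OpenIdeals

variable (Γ) in
def openIdealsAbove [Group 𝔊] [TopologicalSpace 𝔊] [SMul Γ 𝔊] (a : Subgroup 𝔊) :
    Set (Subgroup 𝔊) :=
  {b | IsIdealSG Γ b ∧ a ≤ b ∧ IsOpen (b : Set 𝔊)}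

theorem top_mem_openIdealsAbove [Group 𝔊] [TopologicalSpace 𝔊] [SMul Γ 𝔊] (a : Subgroup 𝔊) :
    ⊤ ∈ openIdealsAbove Γ a :=
  ⟨isIdealSG_top, le_top, by simp⟩

theorem directedOn_openIdealsAbove [Group 𝔊] [TopologicalSpace 𝔊] [SMul Γ 𝔊]
    (a : Subgroup 𝔊) : DirectedOn (· ≥ ·) (openIdealsAbove Γ a) :=
  fun b ⟨hb, hab, hbo⟩ c ⟨hc, hac, hco⟩ =>
    ⟨b ⊓ c, ⟨hb.inf hc, le_inf hab hac, by simpa using hbo.inter hco⟩, inf_le_left, inf_le_right⟩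

variable [Group Γ] [TopologicalSpace Γ] [CompactSpace Γ]
  [Group 𝔊] [TopologicalSpace 𝔊] [IsTopologicalGroup 𝔊] [CompactSpace 𝔊]
  [TotallyDisconnectedSpace 𝔊] [MulDistribMulAction Γ 𝔊] [ContinuousSMul Γ 𝔊]

theorem IsIdealSG.exists_mem_openIdealsAbove_notMem {a : Subgroup 𝔊} (ha : IsIdealSG Γ a)
    {g : 𝔊} (hg : g ∉ a) : ∃ b ∈ openIdealsAbove Γ a, g ∉ b := by
  obtain ⟨M, hM, hMo, hMU⟩ := exists_isIdealSG_isOpen_subset (Γ := Γ)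
    (ha.1.isOpen_compl.preimage (continuous_const_mul g)) (by simpa using hg)
  refine ⟨a ⊔ M, ⟨ha.sup_of_isOpen hM hMo, le_sup_left, Subgroup.isOpen_mono le_sup_right hMo⟩,
    fun hgM => ?_⟩
  have := hM.2.1
  rw [← SetLike.mem_coe, Subgroup.mul_normal] at hgM
  obtain ⟨p, hp, q, hq, rfl⟩ := hgM
  exact hMU (M.inv_mem hq) (by simpa using hp)

theorem IsIdealSG.sInf_openIdealsAbove {a : Subgroup 𝔊} (ha : IsIdealSG Γ a) :
    sInf (openIdealsAbove Γ a) = a := by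
  refine le_antisymm (fun g hg => ?_) (le_sInf fun b hb => hb.2.1)
  by_contra hga
  obtain ⟨b, hb, hgb⟩ := ha.exists_mem_openIdealsAbove_notMem hga
  exact hgb (Subgroup.mem_sInf.1 hg b hb)

end OpenIdeals

/-- Zorn's lemma applies to Kneser ideals ordered by reverse inclusion, since the intersection of
a chain of Kneser ideals is again one. -/
theorem IsKneserIdeal.exists_minimal_le [TopologicalSpace Γ] [CompactSpace Γ] [Group 𝔊]
    [TopologicalSpace 𝔊] [IsTopologicalGroup 𝔊] [SMul Γ 𝔊] {η : Γ → 𝔊} (hη : Continuous η)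
    {a : Subgroup 𝔊} (ha : IsIdealSG Γ a) (hK : IsKneserIdeal η a) :
    ∃ m ≤ a, Minimal (fun m => IsIdealSG Γ m ∧ IsKneserIdeal η m) m := by
  let S : Set (Subgroup 𝔊)ᵒᵈ := {m | IsIdealSG Γ m.ofDual ∧ IsKneserIdeal η m.ofDual}
  have hchains : ∀ c ⊆ S, IsChain (· ≤ ·) c → ∀ b ∈ c, ∃ ub ∈ S, ∀ z ∈ c, z ≤ ub :=
    fun c hc hchain b hb => ⟨sSup c,
      ⟨isIdealSG_sInf fun b hb => (hc hb).1, IsKneserIdeal.sInf hη ⟨b, hb⟩ hchain.directedOn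
        (fun b hb => (hc hb).1.1) fun b hb => (hc hb).2⟩, fun _ => le_sSup⟩
  obtain ⟨m, ham, hm⟩ := zorn_le_nonempty₀ S hchains (OrderDual.toDual a) ⟨ha, hK⟩
  exact ⟨m.ofDual, ham, hm⟩

end

theorem kneser_ideal_criterion_and_minimal_general
    {Γ 𝔊 : Type*} [Group Γ] [TopologicalSpace Γ] [CompactSpace Γ]
    [Group 𝔊] [TopologicalSpace 𝔊] [IsTopologicalGroup 𝔊]
    [CompactSpace 𝔊] [TotallyDisconnectedSpace 𝔊]
    [MulDistribMulAction Γ 𝔊] [ContinuousSMul Γ 𝔊]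
    (η : Γ → 𝔊) (hcont : Continuous η)
    (hcoc : ∀ σ τ : Γ, η (σ * τ) = η σ * σ • η τ) :
    (∀ a : Subgroup 𝔊, IsIdealSG Γ a →
      (IsKneserIdeal η a ↔
        ∀ b : Subgroup 𝔊, IsIdealSG Γ b → a ≤ b → IsOpen (b : Set 𝔊) →
          ∀ D : Subgroup Γ, (D : Set Γ) = η ⁻¹' (b : Set 𝔊) → D.index = b.index)) ∧
    (∀ a : Subgroup 𝔊, IsIdealSG Γ a → IsKneserIdeal η a →
      ∃ m : Subgroup 𝔊, IsIdealSG Γ m ∧ IsKneserIdeal η m ∧ m ≤ a ∧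
        ∀ m' : Subgroup 𝔊, IsIdealSG Γ m' → IsKneserIdeal η m' → m' ≤ m → m' = m) := by
  have hη : IsCocycle η := hcoc
  refine ⟨fun a ha => ⟨fun hK b hb hab hbo D hD => ?_, fun hidx => ?_⟩, fun a ha hK => ?_⟩
  · have := b.quotient_finite_of_isOpen hbo
    exact (hη.isKneserIdeal_iff_index_eq hb.2.2 hD).1 (hK.mono hab)
  · rw [← ha.sInf_openIdealsAbove]
    refine IsKneserIdeal.sInf hcont ⟨⊤, top_mem_openIdealsAbove a⟩ (directedOn_openIdealsAbove a)
      (fun b hb => hb.1.1) fun b ⟨hb, hab, hbo⟩ => ?_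
    have := b.quotient_finite_of_isOpen hbo
    exact (hη.isKneserIdeal_iff_index_eq hb.2.2 rfl).2
      (hidx b hb hab hbo (hη.preimageSubgroup b hb.2.2) rfl)
  · obtain ⟨m, hma, ⟨hm, hmK⟩, hmin⟩ := hK.exists_minimal_le hcont ha
    exact ⟨m, hm, hmK, hma, fun m' hm' hm'K hm'm => le_antisymm hm'm (hmin ⟨hm', hm'K⟩ hm'm)⟩

/-- For a generating cocycle `η : Γ → 𝔊`:
(1) an ideal `a` of `𝔊` is a Kneser ideal if and only if for every open ideal `b ⊇ a` one has
`(Γ : S(b)) = (𝔊 : b)`, where `S(b) = η⁻¹(b)`;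
(2) every Kneser ideal of `𝔊` contains a minimal Kneser ideal. -/
theorem kneser_ideal_criterion_and_minimal
    {Γ 𝔊 : Type*} [Group Γ] [TopologicalSpace Γ] [IsTopologicalGroup Γ]
    [CompactSpace Γ] [T2Space Γ] [TotallyDisconnectedSpace Γ]
    [Group 𝔊] [TopologicalSpace 𝔊] [IsTopologicalGroup 𝔊]
    [CompactSpace 𝔊] [T2Space 𝔊] [TotallyDisconnectedSpace 𝔊]
    [MulDistribMulAction Γ 𝔊] [ContinuousSMul Γ 𝔊]
    (η : Γ → 𝔊) (hcont : Continuous η)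
    (hcoc : ∀ σ τ : Γ, η (σ * τ) = η σ * σ • η τ)
    (hgen : (Subgroup.closure (Set.range η)).topologicalClosure = ⊤) :
    (∀ a : Subgroup 𝔊, IsIdealSG Γ a →
      (IsKneserIdeal η a ↔
        ∀ b : Subgroup 𝔊, IsIdealSG Γ b → a ≤ b → IsOpen (b : Set 𝔊) →
          ∀ D : Subgroup Γ, (D : Set Γ) = η ⁻¹' (b : Set 𝔊) → D.index = b.index)) ∧
    (∀ a : Subgroup 𝔊, IsIdealSG Γ a → IsKneserIdeal η a →
      ∃ m : Subgroup 𝔊, IsIdealSG Γ m ∧ IsKneserIdeal η m ∧ m ≤ a ∧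
        ∀ m' : Subgroup 𝔊, IsIdealSG Γ m' → IsKneserIdeal η m' → m' ≤ m → m' = m) :=
  kneser_ideal_criterion_and_minimal_general η hcont hcoc
end
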